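/- arXiv:1709.05707 — 4 statements merged into one kernel-verified Lean document; each statement's English description precedes it below -/
import Mathlib

section
/- For every nondecreasing real sequence a₁ ≤ a₂ ≤ … ≤ aₙ and every integer l ≥ 1 with l ≤ n, one has ∑_{i=1}^{n−l+1} ( ā_{i,i+l−1} − a_i ) ≤ ((l−1)/2)·(aₙ − a₁), where ā_{i,j} := (a_i + a_{i+1} + … + a_j)/(j − i + 1) is the mean of a_i,…,a_j. -/
open Finset

/-! Averaging the `l` shifts, the left-hand side is `1/l` times
`∑_{j<l} ∑_{i<m} (a_{i+j} - a_i)` with `m = n - l + 1`. Each inner sum telescopes to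
`∑_{i<j} (a_{m+i} - a_i)`, a sum of `j` gaps each at most `a_{n-1} - a_0`; summing `j` over
`j < l` gives `l(l-1)/2`. -/

theorem sum_range_shift_sub_eq {G : Type*} [AddCommGroup G] (f : ℕ → G) (m j : ℕ) :
    ∑ i ∈ range m, (f (i + j) - f i) = ∑ i ∈ range j, (f (m + i) - f i) := by
  have h_shift_right :
      ∑ i ∈ range m, f (i + j) = ∑ i ∈ range (m + j), f i - ∑ i ∈ range j, f i := by
    rw [Nat.add_comm m j, sum_range_add]
    simp only [Nat.add_comm j, add_sub_cancel_left]
  have h_shift_left :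
      ∑ i ∈ range j, f (m + i) = ∑ i ∈ range (m + j), f i - ∑ i ∈ range m, f i := by
    rw [sum_range_add, add_sub_cancel_left]
  rw [sum_sub_distrib, sum_sub_distrib, h_shift_right, h_shift_left]
  abel

theorem sum_range_shift_sub_le {α : Type*} [AddCommGroup α] [PartialOrder α]
    [IsOrderedAddMonoid α] {a : ℕ → α} {n : ℕ} (ha : MonotoneOn a (Set.Iio n)) {m j : ℕ}
    (hmj : m + j ≤ n) :
    ∑ i ∈ range m, (a (i + j) - a i) ≤ j • (a (n - 1) - a 0) := by
  rw [sum_range_shift_sub_eq]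
  calc ∑ i ∈ range j, (a (m + i) - a i)
      ≤ ∑ _i ∈ range j, (a (n - 1) - a 0) := by
        refine sum_le_sum fun i hi => ?_
        have hi : i < j := mem_range.mp hi
        have h_right : a (m + i) ≤ a (n - 1) :=
          ha (Set.mem_Iio.mpr (by omega)) (Set.mem_Iio.mpr (by omega)) (by omega)
        have h_left : a 0 ≤ a i :=
          ha (Set.mem_Iio.mpr (by omega)) (Set.mem_Iio.mpr (by omega)) (Nat.zero_le i)
        exact sub_le_sub h_right h_left
    _ = j • (a (n - 1) - a 0) := by rw [sum_const, card_range]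

theorem sum_range_div_sub {K : Type*} [Field K] {l : ℕ} (hl : (l : K) ≠ 0) (f : ℕ → K)
    (c : K) :
    (∑ j ∈ range l, f j) / l - c = (∑ j ∈ range l, (f j - c)) / l := by
  rw [sum_sub_distrib, sum_const, card_range, nsmul_eq_mul]
  field_simp

theorem sum_range_natCast_mul_two {R : Type*} [CommRing R] (n : ℕ) :
    (∑ i ∈ range n, (i : R)) * 2 = n * (n - 1) := by
  induction n with
  | zero => simp
  | succ n ih =>
    rw [sum_range_succ, add_mul, ih]
    push_cast
    ring

/-- For a nondecreasing sequence `a₀ ≤ … ≤ a_{n-1}` and `1 ≤ l ≤ n`,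
`∑_{i=0}^{n-l} (ā_{i,i+l-1} - a_i) ≤ ((l-1)/2)(a_{n-1} - a₀)`, where `ā_{i,i+l-1}` is
the mean of the `l` entries `a_i, …, a_{i+l-1}`. -/
theorem sum_block_mean_minus_left_le (n l : ℕ) (hl : 1 ≤ l) (hln : l ≤ n)
    (a : ℕ → ℝ) (ha : ∀ i j : ℕ, i ≤ j → j < n → a i ≤ a j) :
    ∑ i ∈ Finset.range (n - l + 1), ((∑ j ∈ Finset.range l, a (i + j)) / l - a i) ≤
      ((l : ℝ) - 1) / 2 * (a (n - 1) - a 0) := by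
  have hl_pos : (0 : ℝ) < l := by exact_mod_cast hl
  have h_mono : MonotoneOn a (Set.Iio n) := fun i _ j hj hij => ha i j hij hj
  calc ∑ i ∈ range (n - l + 1), ((∑ j ∈ range l, a (i + j)) / l - a i)
      = (∑ j ∈ range l, ∑ i ∈ range (n - l + 1), (a (i + j) - a i)) / l := by
        simp only [sum_range_div_sub hl_pos.ne', ← sum_div]
        rw [sum_comm]
    _ ≤ (∑ j ∈ range l, (j : ℝ) * (a (n - 1) - a 0)) / l := by
        gcongr with j hj
        rw [← nsmul_eq_mul]
        exact sum_range_shift_sub_le h_mono (by have := mem_range.mp hj; omega)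
    _ = ((l : ℝ) - 1) / 2 * (a (n - 1) - a 0) := by
        rw [← sum_mul, div_eq_iff hl_pos.ne']
        linear_combination (a (n - 1) - a 0) / 2 * sum_range_natCast_mul_two (R := ℝ) l
end

section
/- Let θ ∈ 𝓘 := {x ∈ ℝⁿ : x₁ ≤ … ≤ xₙ} be a nondecreasing vector with exactly k constant blocks of lengths n₁,…,n_k (so n₁+…+n_k = n and θ is constant on each block with strictly increasing block values). Then the tangent cone of 𝓘 at θ equals the Cartesian product 𝓘_{n₁} × … × 𝓘_{n_k}, where 𝓘_ℓ = {x ∈ ℝ^ℓ : x₁ ≤ … ≤ x_ℓ}. -/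
/-!
A vector `x` is a feasible direction of the monotone cone at `θ` iff it is nondecreasing on
every level set of `θ`: across a strict increase `θ i < θ j` the constraint `η i ≤ η j` is slack
at `θ`, so `θ + ε • x` stays monotone for all small `ε > 0`. This set of directions is closed,
hence it is the tangent cone; and for a piecewise constant `θ` with strictly increasing block
values, its level sets are exactly the blocks.
-/

/-- The monotone (isotonic) cone in ℝⁿ. -/
def monotoneCone (n : ℕ) : Set (EuclideanSpace ℝ (Fin n)) :=
  {x | ∀ i j : Fin n, i ≤ j → x i ≤ x j}

/-- `i₁` and `i₂` lie in the same block of the partition of `{0,…,n-1}` into the `k`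
consecutive intervals `[s j, s (j+1))`. -/
def sameBlock (k : ℕ) (s : ℕ → ℕ) (i₁ i₂ : ℕ) : Prop :=
  ∃ j < k, s j ≤ i₁ ∧ i₁ < s (j + 1) ∧ s j ≤ i₂ ∧ i₂ < s (j + 1)

open Filter Topology

def monotoneConeTangent {n : ℕ} (θ : EuclideanSpace ℝ (Fin n)) :
    Set (EuclideanSpace ℝ (Fin n)) :=
  {x | ∀ i j : Fin n, θ i = θ j → i ≤ j → x i ≤ x j}

section MonotoneConeTangent

variable {n : ℕ} {θ x : EuclideanSpace ℝ (Fin n)}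

theorem isClosed_monotoneConeTangent : IsClosed (monotoneConeTangent θ) := by
  simp only [monotoneConeTangent, Set.ofPred_forall]
  exact isClosed_iInter fun i => isClosed_iInter fun j => isClosed_iInter fun _ =>
    isClosed_iInter fun _ => isClosed_le (by fun_prop) (by fun_prop)

theorem smul_sub_mem_monotoneConeTangent {t : ℝ} (ht : 0 ≤ t) {η : EuclideanSpace ℝ (Fin n)}
    (hη : η ∈ monotoneCone n) : t • (η - θ) ∈ monotoneConeTangent θ := by
  intro i j hθij hij
  simp only [PiLp.smul_apply, PiLp.sub_apply, smul_eq_mul, hθij]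
  exact mul_le_mul_of_nonneg_left (sub_le_sub_right (hη i j hij) _) ht

theorem eventually_add_mul_le_add_mul (hθ : θ ∈ monotoneCone n)
    (hx : x ∈ monotoneConeTangent θ) {i j : Fin n} (hij : i ≤ j) :
    ∀ᶠ ε in 𝓝[>] (0 : ℝ), θ i + ε * x i ≤ θ j + ε * x j := by
  rcases (hθ i j hij).lt_or_eq with hlt | heq
  · have hlt' : θ i + 0 * x i < θ j + 0 * x j := by simpa using hlt
    have hev : ∀ᶠ ε in 𝓝 (0 : ℝ), θ i + ε * x i < θ j + ε * x j :=
      ContinuousAt.eventually_lt (by fun_prop) (by fun_prop) hlt'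
    exact (hev.filter_mono nhdsWithin_le_nhds).mono fun _ h => h.le
  · filter_upwards [self_mem_nhdsWithin] with ε hε
    rw [heq]
    exact (add_le_add_iff_left _).2 (mul_le_mul_of_nonneg_left (hx i j heq hij) (le_of_lt hε))

theorem exists_smul_sub_eq_of_mem_monotoneConeTangent (hθ : θ ∈ monotoneCone n)
    (hx : x ∈ monotoneConeTangent θ) :
    ∃ t : ℝ, 0 ≤ t ∧ ∃ η ∈ monotoneCone n, x = t • (η - θ) := by
  have hev : ∀ᶠ ε in 𝓝[>] (0 : ℝ), θ + ε • x ∈ monotoneCone n := by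
    simp only [monotoneCone, Set.mem_ofPred_eq, PiLp.add_apply, PiLp.smul_apply, smul_eq_mul,
      eventually_all]
    exact fun i j hij => eventually_add_mul_le_add_mul hθ hx hij
  obtain ⟨ε, hε, hpos⟩ := (hev.and self_mem_nhdsWithin).exists
  refine ⟨ε⁻¹, inv_nonneg.2 (le_of_lt hpos), θ + ε • x, hε, ?_⟩
  rw [add_sub_cancel_left, smul_smul, inv_mul_cancel₀ (ne_of_gt hpos), one_smul]

theorem closure_cone_monotoneCone_eq_monotoneConeTangent (hθ : θ ∈ monotoneCone n) :
    closure {x | ∃ t : ℝ, 0 ≤ t ∧ ∃ η ∈ monotoneCone n, x = t • (η - θ)} =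
      monotoneConeTangent θ := by
  refine subset_antisymm (closure_minimal ?_ isClosed_monotoneConeTangent)
    fun x hx => subset_closure (exists_smul_sub_eq_of_mem_monotoneConeTangent hθ hx)
  rintro _ ⟨t, ht, η, hη, rfl⟩
  exact smul_sub_mem_monotoneConeTangent ht hη

end MonotoneConeTangent

theorem exists_le_and_lt_succ_of_le_of_lt {s : ℕ → ℕ} {i : ℕ} (hi₀ : s 0 ≤ i) :
    ∀ {k : ℕ}, i < s k → ∃ j < k, s j ≤ i ∧ i < s (j + 1)
  | 0, hik => absurd hi₀ (not_le.2 hik)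
  | k + 1, hik => by
    by_cases hk : s k ≤ i
    · exact ⟨k, k.lt_succ_self, hk, hik⟩
    · obtain ⟨j, hjk, hj⟩ := exists_le_and_lt_succ_of_le_of_lt hi₀ (not_le.1 hk)
      exact ⟨j, hjk.trans k.lt_succ_self, hj⟩

theorem sameBlock_iff_eq {n k : ℕ} {θ : EuclideanSpace ℝ (Fin n)} {s : ℕ → ℕ}
    (hs0 : s 0 = 0) (hsk : s k = n)
    (hconst : ∀ i₁ i₂ : Fin n, sameBlock k s i₁ i₂ → θ i₁ = θ i₂)
    (hjump : ∀ (i₁ i₂ : Fin n) (j₁ j₂ : ℕ), j₁ < j₂ → j₂ < k →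
      s j₁ ≤ (i₁ : ℕ) → (i₁ : ℕ) < s (j₁ + 1) →
      s j₂ ≤ (i₂ : ℕ) → (i₂ : ℕ) < s (j₂ + 1) → θ i₁ < θ i₂)
    (i₁ i₂ : Fin n) : sameBlock k s i₁ i₂ ↔ θ i₁ = θ i₂ := by
  refine ⟨hconst i₁ i₂, fun heq => ?_⟩
  have block : ∀ i : Fin n, ∃ j < k, s j ≤ i ∧ (i : ℕ) < s (j + 1) := fun i =>
    exists_le_and_lt_succ_of_le_of_lt (hs0.trans_le (Nat.zero_le _)) (i.isLt.trans_eq hsk.symm)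
  obtain ⟨j₁, hj₁, hi₁⟩ := block i₁
  obtain ⟨j₂, hj₂, hi₂⟩ := block i₂
  rcases lt_trichotomy j₁ j₂ with hlt | rfl | hgt
  · exact absurd heq (hjump i₁ i₂ j₁ j₂ hlt hj₂ hi₁.1 hi₁.2 hi₂.1 hi₂.2).ne
  · exact ⟨j₁, hj₁, hi₁.1, hi₁.2, hi₂.1, hi₂.2⟩
  · exact absurd heq.symm (hjump i₂ i₁ j₂ j₁ hgt hj₁ hi₂.1 hi₂.2 hi₁.1 hi₁.2).ne

theorem tangent_cone_isotonic_at_piecewise_constant_general {n k : ℕ}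
    (θ : EuclideanSpace ℝ (Fin n)) (hθ : θ ∈ monotoneCone n)
    (s : ℕ → ℕ) (hs0 : s 0 = 0) (hsk : s k = n)
    (hconst : ∀ i₁ i₂ : Fin n, sameBlock k s i₁ i₂ → θ i₁ = θ i₂)
    (hjump : ∀ (i₁ i₂ : Fin n) (j₁ j₂ : ℕ), j₁ < j₂ → j₂ < k →
      s j₁ ≤ (i₁ : ℕ) → (i₁ : ℕ) < s (j₁ + 1) →
      s j₂ ≤ (i₂ : ℕ) → (i₂ : ℕ) < s (j₂ + 1) → θ i₁ < θ i₂) :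
    closure {x | ∃ t : ℝ, 0 ≤ t ∧ ∃ η ∈ monotoneCone n, x = t • (η - θ)} =
      {x : EuclideanSpace ℝ (Fin n) |
        ∀ i₁ i₂ : Fin n, sameBlock k s i₁ i₂ → i₁ ≤ i₂ → x i₁ ≤ x i₂} := by
  rw [closure_cone_monotoneCone_eq_monotoneConeTangent hθ]
  simp only [monotoneConeTangent, sameBlock_iff_eq hs0 hsk hconst hjump]

/-- Let `θ ∈ 𝓘` be a nondecreasing vector with exactly `k` constant blocks, the blocks being
the consecutive intervals `[s j, s (j+1))` (`s 0 = 0`, `s k = n`, `s` strictly increasing on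
`{0,…,k}`), with `θ` constant on each block and strictly increasing between consecutive blocks.
Then the tangent cone of `𝓘` at `θ` equals the Cartesian product `𝓘_{n₁} × … × 𝓘_{n_k}`:
the set of vectors that are nondecreasing within each block. -/
theorem tangent_cone_isotonic_at_piecewise_constant {n k : ℕ}
    (θ : EuclideanSpace ℝ (Fin n)) (hθ : θ ∈ monotoneCone n)
    (s : ℕ → ℕ) (hs0 : s 0 = 0) (hsk : s k = n)
    (hinc : ∀ j < k, s j < s (j + 1))
    (hconst : ∀ i₁ i₂ : Fin n, sameBlock k s i₁ i₂ → θ i₁ = θ i₂)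
    (hjump : ∀ (i₁ i₂ : Fin n) (j₁ j₂ : ℕ), j₁ < j₂ → j₂ < k →
      s j₁ ≤ (i₁ : ℕ) → (i₁ : ℕ) < s (j₁ + 1) →
      s j₂ ≤ (i₂ : ℕ) → (i₂ : ℕ) < s (j₂ + 1) → θ i₁ < θ i₂) :
    closure {x | ∃ t : ℝ, 0 ≤ t ∧ ∃ η ∈ monotoneCone n, x = t • (η - θ)} =
      {x : EuclideanSpace ℝ (Fin n) |
        ∀ i₁ i₂ : Fin n, sameBlock k s i₁ i₂ → i₁ ≤ i₂ → x i₁ ≤ x i₂} :=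
  tangent_cone_isotonic_at_piecewise_constant_general θ hθ s hs0 hsk hconst hjump
end

section
/- Let 𝓒 ⊆ ℝⁿ be a nonempty closed convex set, θ* ∈ ℝⁿ, σ > 0, and Z a random vector in ℝⁿ with 𝔼Z = 0 and 𝔼‖Z‖² < ∞. Let Y = θ* + σZ and let θ̂ be the projection of Y onto 𝓒. Then 𝔼‖θ̂ − θ*‖² ≤ inf_{θ ∈ 𝓒} { ‖θ* − θ‖² + σ² 𝔼‖Π_{T_𝓒(θ)}(Z)‖² }, where Π_{T_𝓒(θ)} denotes the metric projection onto the tangent cone T_𝓒(θ) of 𝓒 at θ. -/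
open MeasureTheory

/-- The tangent cone of a set `C` at `θ`: the closure of `{t (η - θ) : t ≥ 0, η ∈ C}`. -/
def tangentConeOf {n : ℕ} (C : Set (EuclideanSpace ℝ (Fin n)))
    (θ : EuclideanSpace ℝ (Fin n)) : Set (EuclideanSpace ℝ (Fin n)) :=
  closure {x | ∃ t : ℝ, 0 ≤ t ∧ ∃ η ∈ C, x = t • (η - θ)}

/-!
Testing the variational inequality of the projection `θ̂` onto `C` at `θ` gives
`⟪θ̂ - θ*, θ̂ - θ⟫ ≤ σ ⟪Z, θ̂ - θ⟫`. Since `θ̂ - θ` lies in the convex cone `T_C(θ)`, so does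
`θ̂ - θ + Π_T(Z)`, and the variational inequality of `Π_T(Z)` lets us replace `Z` by `Π_T(Z)`
there. Cauchy–Schwarz and `2ab - b² ≤ a²` turn this into the bound for every realization of `Z`,
which is then integrated: `‖Π_T(Z)‖²` is integrable because the projection onto `T_C(θ)` is
1-Lipschitz and fixes `0`.
-/

open RealInnerProductSpace

section MetricProj

variable {E : Type*} [NormedAddCommGroup E] {K : Set E} {z z₁ z₂ p p₁ p₂ : E}

def IsMetricProj (K : Set E) (z p : E) : Prop := p ∈ K ∧ ∀ c ∈ K, ‖z - p‖ ≤ ‖z - c‖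

lemma isMetricProj_iff_norm_eq_iInf :
    IsMetricProj K z p ↔ p ∈ K ∧ ‖z - p‖ = ⨅ w : K, ‖z - w‖ := by
  have hbdd : BddBelow (Set.range fun w : K => ‖z - w‖) :=
    ⟨0, Set.forall_mem_range.2 fun _ => norm_nonneg _⟩
  refine ⟨fun h => ⟨h.1, ?_⟩, fun ⟨hp, h⟩ => ⟨hp, fun c hc => h ▸ ciInf_le hbdd ⟨c, hc⟩⟩⟩
  have : Nonempty K := ⟨⟨p, h.1⟩⟩
  exact le_antisymm (le_ciInf fun w => h.2 w w.2) (ciInf_le hbdd ⟨p, h.1⟩)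

variable [InnerProductSpace ℝ E]

lemma IsMetricProj.inner_sub_nonpos (hK : Convex ℝ K) (h : IsMetricProj K z p) {w : E}
    (hw : w ∈ K) : ⟪z - p, w - p⟫ ≤ 0 := by
  obtain ⟨hp, heq⟩ := isMetricProj_iff_norm_eq_iInf.1 h
  exact (norm_eq_iInf_iff_real_inner_le_zero hK hp).1 heq w hw

lemma IsMetricProj.norm_sub_le (hK : Convex ℝ K) (h₁ : IsMetricProj K z₁ p₁)
    (h₂ : IsMetricProj K z₂ p₂) : ‖p₁ - p₂‖ ≤ ‖z₁ - z₂‖ := by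
  have hsq : ‖p₁ - p₂‖ ^ 2 ≤ ⟪z₁ - z₂, p₁ - p₂⟫ := by
    have h₁₂ := h₁.inner_sub_nonpos hK h₂.1
    have h₂₁ := h₂.inner_sub_nonpos hK h₁.1
    rw [← real_inner_self_eq_norm_sq]
    simp only [inner_sub_left, inner_sub_right, real_inner_comm] at h₁₂ h₂₁ ⊢
    linarith
  have hcs := real_inner_le_norm (z₁ - z₂) (p₁ - p₂)
  nlinarith [norm_nonneg (p₁ - p₂), norm_nonneg (z₁ - z₂)]

lemma IsMetricProj.eq (hK : Convex ℝ K) (h₁ : IsMetricProj K z p₁) (h₂ : IsMetricProj K z p₂) :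
    p₁ = p₂ := by
  simpa [sub_eq_zero] using h₁.norm_sub_le hK h₂

lemma IsMetricProj.norm_le (hK : Convex ℝ K) (h0 : (0 : E) ∈ K) (h : IsMetricProj K z p) :
    ‖p‖ ≤ ‖z‖ := by
  simpa using h.norm_sub_le hK (z₂ := 0) ⟨h0, by simp⟩

lemma exists_lipschitzWith_isMetricProj (hne : K.Nonempty) (hKc : IsComplete K)
    (hK : Convex ℝ K) : ∃ F : E → E, LipschitzWith 1 F ∧ ∀ z, IsMetricProj K z (F z) := by
  choose F hF using fun z => exists_norm_eq_iInf_of_complete_convex hne hKc hK z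
  have hproj : ∀ z, IsMetricProj K z (F z) := fun z =>
    isMetricProj_iff_norm_eq_iInf.2 (hF z)
  refine ⟨F, LipschitzWith.of_dist_le_mul fun x y => ?_, hproj⟩
  simpa [dist_eq_norm] using (hproj x).norm_sub_le hK (hproj y)

lemma norm_sub_sq_le_of_inner_nonpos {θ θstar θh z pz : E} {σ : ℝ} (hσ : 0 ≤ σ)
    (hθh : ⟪θstar + σ • z - θh, θ - θh⟫ ≤ 0) (hpz : ⟪z - pz, θh - θ⟫ ≤ 0) :
    ‖θh - θstar‖ ^ 2 ≤ ‖θstar - θ‖ ^ 2 + σ ^ 2 * ‖pz‖ ^ 2 := by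
  have hinner : ⟪θh - θstar, θh - θ⟫ ≤ σ * ⟪pz, θh - θ⟫ := by
    simp only [inner_sub_left, inner_sub_right, inner_add_left,
      real_inner_smul_right, real_inner_comm] at hθh hpz ⊢
    nlinarith
  have hexpand : ‖θstar - θ‖ ^ 2
      = ‖θh - θstar‖ ^ 2 - 2 * ⟪θh - θstar, θh - θ⟫ + ‖θh - θ‖ ^ 2 := by
    rw [show θstar - θ = (θh - θ) - (θh - θstar) by abel, norm_sub_sq_real, real_inner_comm]
    ring
  have hcs : σ * ⟪pz, θh - θ⟫ ≤ σ * ‖pz‖ * ‖θh - θ‖ := by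
    rw [mul_assoc]; exact mul_le_mul_of_nonneg_left (real_inner_le_norm _ _) hσ
  nlinarith [sq_nonneg (σ * ‖pz‖ - ‖θh - θ‖)]

end MetricProj

lemma MeasureTheory.Integrable.norm_sq_comp {Ω E F : Type*} [MeasurableSpace Ω] {μ : Measure Ω}
    [NormedAddCommGroup E] [NormedAddCommGroup F] {Z : Ω → E} {f : E → F}
    (hf : Continuous f) (hle : ∀ z, ‖f z‖ ≤ ‖z‖) (hZ : AEStronglyMeasurable Z μ)
    (hZsq : Integrable (fun ω => ‖Z ω‖ ^ 2) μ) : Integrable (fun ω => ‖f (Z ω)‖ ^ 2) μ := by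
  refine hZsq.mono' ((hf.norm.pow 2).comp_aestronglyMeasurable hZ) (.of_forall fun ω => ?_)
  rw [Real.norm_of_nonneg (by positivity)]
  exact pow_le_pow_left₀ (norm_nonneg _) (hle _) 2

section FeasibleCone

variable {E : Type*} [AddCommGroup E] [Module ℝ E] {C : Set E} {θ : E}

def Convex.feasibleCone (hC : Convex ℝ C) (hθ : θ ∈ C) : PointedCone ℝ E where
  carrier := {x | ∃ t : ℝ, 0 ≤ t ∧ ∃ η ∈ C, x = t • (η - θ)}
  zero_mem' := ⟨0, le_rfl, θ, hθ, by simp⟩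
  smul_mem' := by
    rintro ⟨c, hc⟩ _ ⟨t, ht, η, hη, rfl⟩
    exact ⟨c * t, mul_nonneg hc ht, η, hη, by simp [smul_smul]⟩
  add_mem' := by
    rintro _ _ ⟨t₁, ht₁, η₁, hη₁, rfl⟩ ⟨t₂, ht₂, η₂, hη₂, rfl⟩
    rcases (add_nonneg ht₁ ht₂).eq_or_lt with hs | hs
    · obtain ⟨rfl, rfl⟩ : t₁ = 0 ∧ t₂ = 0 := ⟨by linarith, by linarith⟩
      exact ⟨0, le_rfl, θ, hθ, by simp⟩
    · refine ⟨t₁ + t₂, hs.le, (t₁ / (t₁ + t₂)) • η₁ + (t₂ / (t₁ + t₂)) • η₂,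
        hC hη₁ hη₂ (by positivity) (by positivity) (by field_simp), ?_⟩
      simp only [smul_sub, smul_add, smul_smul]
      field_simp
      module

end FeasibleCone

section TangentCone
variable {n : ℕ} {C : Set (EuclideanSpace ℝ (Fin n))} {θ : EuclideanSpace ℝ (Fin n)}

lemma Convex.tangentConeOf_eq_closure (hC : Convex ℝ C) (hθ : θ ∈ C) :
    tangentConeOf C θ = (hC.feasibleCone hθ).closure := rfl

lemma IsMetricProj.norm_sub_sq_le_tangentConeOf (hC : Convex ℝ C) (hθ : θ ∈ C)
    {θstar θh z pz : EuclideanSpace ℝ (Fin n)} {σ : ℝ} (hσ : 0 ≤ σ)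
    (hθh : IsMetricProj C (θstar + σ • z) θh) (hpz : IsMetricProj (tangentConeOf C θ) z pz) :
    ‖θh - θstar‖ ^ 2 ≤ ‖θstar - θ‖ ^ 2 + σ ^ 2 * ‖pz‖ ^ 2 := by
  rw [hC.tangentConeOf_eq_closure hθ] at hpz
  have hdir : θh - θ ∈ (hC.feasibleCone hθ).closure :=
    subset_closure ⟨1, zero_le_one, θh, hθh.1, (one_smul ℝ _).symm⟩
  have := hpz.inner_sub_nonpos (PointedCone.convex _) (add_mem hdir hpz.1)
  rw [add_sub_cancel_right] at this
  exact norm_sub_sq_le_of_inner_nonpos hσ (hθh.inner_sub_nonpos hC hθ) this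

end TangentCone

theorem risk_bound_tangent_cone_general {n : ℕ} {Ω : Type*} [MeasureSpace Ω]
    (μ : Measure Ω) [IsProbabilityMeasure μ]
    (C : Set (EuclideanSpace ℝ (Fin n)))
    (hconv : Convex ℝ C)
    (θstar : EuclideanSpace ℝ (Fin n)) (σ : ℝ) (hσ : 0 < σ)
    (Z : Ω → EuclideanSpace ℝ (Fin n)) (hZmeas : AEStronglyMeasurable Z μ)
    (hZsq : Integrable (fun ω => ‖Z ω‖ ^ 2) μ)
    (Y : Ω → EuclideanSpace ℝ (Fin n)) (hY : ∀ ω, Y ω = θstar + σ • Z ω)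
    (θhat : Ω → EuclideanSpace ℝ (Fin n))
    (hproj : ∀ ω, θhat ω ∈ C ∧ ∀ c ∈ C, ‖Y ω - θhat ω‖ ≤ ‖Y ω - c‖)
    (PZ : EuclideanSpace ℝ (Fin n) → Ω → EuclideanSpace ℝ (Fin n))
    (hPZ : ∀ θ ∈ C, ∀ ω, PZ θ ω ∈ tangentConeOf C θ ∧
      ∀ w ∈ tangentConeOf C θ, ‖Z ω - PZ θ ω‖ ≤ ‖Z ω - w‖) :
    ∀ θ ∈ C,
      ∫ ω, ‖θhat ω - θstar‖ ^ 2 ∂μ ≤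
        ‖θstar - θ‖ ^ 2 + σ ^ 2 * ∫ ω, ‖PZ θ ω‖ ^ 2 ∂μ := by
  intro θ hθ
  have hT : Convex ℝ (tangentConeOf C θ) :=
    hconv.tangentConeOf_eq_closure hθ ▸ PointedCone.convex _
  have h0 : (0 : EuclideanSpace ℝ (Fin n)) ∈ tangentConeOf C θ :=
    hconv.tangentConeOf_eq_closure hθ ▸ zero_mem _
  obtain ⟨F, hFlip, hF⟩ :=
    exists_lipschitzWith_isMetricProj ⟨0, h0⟩ isClosed_closure.isComplete hT
  have hPZF : ∀ ω, PZ θ ω = F (Z ω) := fun ω => IsMetricProj.eq hT (hPZ θ hθ ω) (hF (Z ω))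
  have hint : Integrable (fun ω => ‖PZ θ ω‖ ^ 2) μ := by
    simpa only [hPZF] using
      hZsq.norm_sq_comp hFlip.continuous (fun z => (hF z).norm_le hT h0) hZmeas
  have hpt : ∀ ω, ‖θhat ω - θstar‖ ^ 2 ≤ ‖θstar - θ‖ ^ 2 + σ ^ 2 * ‖PZ θ ω‖ ^ 2 := fun ω =>
    IsMetricProj.norm_sub_sq_le_tangentConeOf hconv hθ hσ.le (hY ω ▸ hproj ω) (hPZ θ hθ ω)
  calc ∫ ω, ‖θhat ω - θstar‖ ^ 2 ∂μ
      ≤ ∫ ω, (‖θstar - θ‖ ^ 2 + σ ^ 2 * ‖PZ θ ω‖ ^ 2) ∂μ :=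
        integral_mono_of_nonneg (.of_forall fun ω => by positivity)
          ((integrable_const _).add (hint.const_mul _)) (.of_forall hpt)
    _ = ‖θstar - θ‖ ^ 2 + σ ^ 2 * ∫ ω, ‖PZ θ ω‖ ^ 2 ∂μ := by
        rw [integral_add (integrable_const _) (hint.const_mul _), integral_const,
          integral_const_mul, probReal_univ, one_smul]

/-- Bellec's oracle inequality via tangent cones: if `Y = θ* + σ Z` with `𝔼 Z = 0`,
`𝔼‖Z‖² < ∞`, and `θ̂(ω)` is the projection of `Y(ω)` onto the nonempty closed convex set
`C`, then for every `θ ∈ C`,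
`𝔼‖θ̂ - θ*‖² ≤ ‖θ* - θ‖² + σ² 𝔼‖Π_{T_C(θ)}(Z)‖²`,
where `Π_{T_C(θ)}(Z)(ω)` is the projection of `Z(ω)` onto the tangent cone `T_C(θ)`.
(The bound for every `θ ∈ C` is equivalent to the bound with the infimum over `θ ∈ C`.) -/
theorem risk_bound_tangent_cone {n : ℕ} {Ω : Type*} [MeasureSpace Ω]
    (μ : Measure Ω) [IsProbabilityMeasure μ]
    (C : Set (EuclideanSpace ℝ (Fin n))) (hne : C.Nonempty) (hclosed : IsClosed C)
    (hconv : Convex ℝ C)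
    (θstar : EuclideanSpace ℝ (Fin n)) (σ : ℝ) (hσ : 0 < σ)
    (Z : Ω → EuclideanSpace ℝ (Fin n)) (hZmeas : AEStronglyMeasurable Z μ)
    (hZint : Integrable Z μ) (hZmean : ∫ ω, Z ω ∂μ = 0)
    (hZsq : Integrable (fun ω => ‖Z ω‖ ^ 2) μ)
    (Y : Ω → EuclideanSpace ℝ (Fin n)) (hY : ∀ ω, Y ω = θstar + σ • Z ω)
    (θhat : Ω → EuclideanSpace ℝ (Fin n))
    (hproj : ∀ ω, θhat ω ∈ C ∧ ∀ c ∈ C, ‖Y ω - θhat ω‖ ≤ ‖Y ω - c‖)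
    (PZ : EuclideanSpace ℝ (Fin n) → Ω → EuclideanSpace ℝ (Fin n))
    (hPZ : ∀ θ ∈ C, ∀ ω, PZ θ ω ∈ tangentConeOf C θ ∧
      ∀ w ∈ tangentConeOf C θ, ‖Z ω - PZ θ ω‖ ≤ ‖Z ω - w‖) :
    ∀ θ ∈ C,
      ∫ ω, ‖θhat ω - θstar‖ ^ 2 ∂μ ≤
        ‖θstar - θ‖ ^ 2 + σ ^ 2 * ∫ ω, ‖PZ θ ω‖ ^ 2 ∂μ :=
  risk_bound_tangent_cone_general μ C hconv θstar σ hσ Z hZmeas hZsq Y hY θhat hproj PZ hPZ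
end

section
/- Let ≼ be the unordered weak majorization preorder on ℝ^d: u ≼ v iff ∑_{k=1}^{i} u_k ≤ ∑_{k=1}^{i} v_k for all i ≤ d. For 1 ≤ k ≤ d−1 and ε ∈ ℝ define T_{k,ε}(z) := (z₁,…,z_{k−1}, z_k + ε, z_{k+1} − ε, z_{k+2},…,z_d), and let T_{d,ε}(z) := (z₁,…,z_{d−1}, z_d + ε). Then a function f : ℝ^d → ℝ is order preserving with respect to ≼ (u ≼ v implies f(u) ≤ f(v)) if and only if for every z ∈ ℝ^d and every k ∈ {1,…,d}, the map ε ↦ f(T_{k,ε}(z)) is nondecreasing in ε. -/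
/-- The unordered weak majorization relation on `ℝ^d`. -/
def weakMajorizes {d : ℕ} (u v : Fin d → ℝ) : Prop :=
  ∀ i : Fin d, ∑ k ∈ Finset.Iic i, u k ≤ ∑ k ∈ Finset.Iic i, v k

/-- The transformation `T_{k,ε}` adding `ε` to coordinate `k` and subtracting `ε` from
coordinate `k+1` (when it exists; for the last coordinate it just adds `ε`). -/
def Tshift {d : ℕ} (k : Fin d) (ε : ℝ) (z : Fin d → ℝ) : Fin d → ℝ :=
  fun i => z i + (if i = k then ε else 0) - (if (i : ℕ) = (k : ℕ) + 1 then ε else 0)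

/-!
Taking partial sums `z ↦ (∑_{j ≤ i} z_j)_i` is a linear automorphism of `ℝ^d` that turns `≼` into
the coordinatewise order and `T_{k,ε}` into translation by `ε` along the `k`-th coordinate. So the
claim reduces to the fact that a function on a finite product is monotone iff it is monotone in
each coordinate separately, which follows by moving from `x` to `y ≥ x` one coordinate at a time.
-/

open Finset Function

section CoordinatewiseMonotone

variable {ι α β : Type*} [DecidableEq ι] [Finite ι] [Preorder β]

theorem monotone_iff_forall_monotone_update [Preorder α] {g : (ι → α) → β} :
    Monotone g ↔ ∀ x i, Monotone fun t => g (update x i t) := by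
  refine ⟨fun hg x i => hg.comp update_mono, fun h x y hxy => ?_⟩
  have := Fintype.ofFinite ι
  have step : ∀ s : Finset ι, g x ≤ g (s.piecewise y x) := by
    intro s
    induction s using Finset.induction_on with
    | empty => simp
    | insert a s ha ih =>
      calc g x ≤ g (s.piecewise y x) := ih
        _ = g (update (s.piecewise y x) a (x a)) := by
          rw [← piecewise_eq_of_notMem s y x ha, update_eq_self]
        _ ≤ g ((insert a s).piecewise y x) := by
          rw [piecewise_insert]; exact h _ a (hxy a)
  simpa using step univ

theorem monotone_iff_forall_monotone_add_single {G : Type*} [AddCommGroup G] [PartialOrder G]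
    [IsOrderedAddMonoid G] {g : (ι → G) → β} :
    Monotone g ↔ ∀ x i, Monotone fun t : G => g (x + (Pi.single i t : ι → G)) := by
  rw [monotone_iff_forall_monotone_update]
  constructor
  · intro h x i t t' htt'
    have hx : ∀ s, update x i (x i + s) = x + Pi.single i s := fun s => by
      rw [Pi.update_eq_sub_add_single, Pi.single_add]; abel
    simpa only [hx] using h x i (show x i + t ≤ x i + t' by gcongr)
  · intro h x i
    simpa only [Pi.update_eq_sub_add_single] using h (x - Pi.single i (x i)) i

end CoordinatewiseMonotone

section PartialSums

variable {R ι : Type*} [PartialOrder ι] [LocallyFiniteOrderBot ι]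

variable (R ι) in
def partialSums [Semiring R] : (ι → R) →ₗ[R] ι → R where
  toFun z i := ∑ j ∈ Iic i, z j
  map_add' z w := by ext i; exact sum_add_distrib
  map_smul' c z := by ext i; exact (mul_sum ..).symm

theorem partialSums_apply [Semiring R] (z : ι → R) (i : ι) :
    partialSums R ι z i = ∑ j ∈ Iic i, z j :=
  rfl

theorem partialSums_injective [Ring R] [WellFoundedLT ι] :
    Injective (partialSums R ι) := by
  refine (injective_iff_map_eq_zero _).2 fun z hz => funext fun i => ?_
  induction i using WellFoundedLT.induction with
  | _ i ih =>
    have hi := congr_fun hz i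
    rwa [partialSums_apply, ← add_sum_Iio_eq_sum_Iic,
      sum_eq_zero fun j hj => ih j (mem_Iio.1 hj), add_zero] at hi

variable (R ι) in
noncomputable def partialSumsEquiv [Field R] [Finite ι] : (ι → R) ≃ₗ[R] ι → R :=
  .ofInjectiveEndo _ partialSums_injective

theorem coe_partialSumsEquiv [Field R] [Finite ι] :
    ⇑(partialSumsEquiv R ι) = partialSums R ι :=
  rfl

end PartialSums

theorem weakMajorizes_iff_partialSums_le {d : ℕ} {u v : Fin d → ℝ} :
    weakMajorizes u v ↔ partialSums ℝ (Fin d) u ≤ partialSums ℝ (Fin d) v :=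
  Iff.rfl

theorem sum_Iic_ite_val_eq_add_one {M : Type*} [AddCommMonoid M] {d : ℕ} (k i : Fin d) (m : M) :
    ∑ j ∈ Iic i, (if (j : ℕ) = k + 1 then m else 0) = if k < i then m else 0 := by
  by_cases hki : k < i
  · have hk : (k : ℕ) + 1 < d := by omega
    simp_rw [← Fin.ext_iff (b := ⟨k + 1, hk⟩)]
    rw [sum_ite_eq', if_pos (mem_Iic.2 (show (⟨k + 1, hk⟩ : Fin d) ≤ i from hki)), if_pos hki]
  · rw [if_neg hki]
    refine sum_eq_zero fun j hj => if_neg ?_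
    have := Fin.le_def.1 (mem_Iic.1 hj)
    omega

theorem partialSums_Tshift {d : ℕ} (k : Fin d) (ε : ℝ) (z : Fin d → ℝ) :
    partialSums ℝ (Fin d) (Tshift k ε z) = partialSums ℝ (Fin d) z + Pi.single k ε := by
  ext i
  simp only [partialSums_apply, Tshift, sum_sub_distrib, sum_add_distrib, sum_ite_eq', mem_Iic,
    sum_Iic_ite_val_eq_add_one, Pi.add_apply, Pi.single_apply]
  rcases lt_trichotomy k i with h | rfl | h
  · simp [h, h.le, h.ne']
  · simp
  · simp [not_le.2 h, h.ne, not_lt.2 h.le]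

/-- A function `f : ℝ^d → ℝ` is order preserving for unordered weak majorization iff for
every `z` and every `k`, the map `ε ↦ f(T_{k,ε}(z))` is nondecreasing in `ε`. -/
theorem orderPreserving_iff_Tshift_monotone {d : ℕ} (f : (Fin d → ℝ) → ℝ) :
    (∀ u v : Fin d → ℝ, weakMajorizes u v → f u ≤ f v) ↔
      (∀ z : Fin d → ℝ, ∀ k : Fin d, Monotone fun ε : ℝ => f (Tshift k ε z)) := by
  obtain ⟨e, he⟩ : ∃ e : (Fin d → ℝ) ≃ₗ[ℝ] Fin d → ℝ, ⇑e = partialSums ℝ (Fin d) :=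
    ⟨_, coe_partialSumsEquiv⟩
  have hf : ∀ z k ε, (f ∘ e.symm) (e z + Pi.single k ε) = f (Tshift k ε z) := by
    intro z k ε
    rw [he, ← partialSums_Tshift, ← he]
    simp
  calc (∀ u v, weakMajorizes u v → f u ≤ f v)
      ↔ Monotone (f ∘ e.symm) := by
        refine Iff.trans ?_ (e.surjective.forall₂
          (p := fun a b => a ≤ b → f (e.symm a) ≤ f (e.symm b))).symm
        simp only [weakMajorizes_iff_partialSums_le, ← he, LinearEquiv.symm_apply_apply]
    _ ↔ ∀ (x : Fin d → ℝ) (k : Fin d), Monotone fun ε : ℝ => (f ∘ e.symm) (x + Pi.single k ε) :=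
        monotone_iff_forall_monotone_add_single
    _ ↔ ∀ z k, Monotone fun ε : ℝ => f (Tshift k ε z) := by
        rw [e.surjective.forall]
        simp only [hf]
end
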